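/- Let j ∈ ℤ, A ≥ 0, f ∈ E_A, n > A and m ∈ ℕ. Then the function x ↦ (S_{n,j}f)(x) is m times differentiable on (0,∞) and for every x > 0, (S_{n,j}f)^{(m)}(x) = n^m · ∑_{ℓ=0}^{m} (−1)^{m−ℓ} C(m,ℓ) (S_{n,j−ℓ}f)(x). -/

import Mathlib

open MeasureTheory Real Filter

/-- Szász basis function `s_{n,k}(x)` for natural index `k`. -/
noncomputable def szasz (n k : ℕ) (x : ℝ) : ℝ :=
  Real.exp (-(n : ℝ) * x) * ((n : ℝ) * x) ^ k / (Nat.factorial k)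

/-- Szász basis function for integer index, vanishing for negative index. -/
noncomputable def szaszZ (n : ℕ) (k : ℤ) (x : ℝ) : ℝ :=
  if 0 ≤ k then szasz n k.toNat x else 0

/-- The generalized Szász–Mirakjan–Durrmeyer operator `S_{n,j}`. -/
noncomputable def Sop (n : ℕ) (j : ℤ) (f : ℝ → ℝ) (x : ℝ) : ℝ :=
  f 0 * ∑ k ∈ Finset.range j.toNat, szasz n k x
    + ∑' (k : ℕ), szasz n k x *
        ((n : ℝ) * ∫ t in Set.Ioi (0 : ℝ), szaszZ n ((k : ℤ) - j) t * f t)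

/-- Membership in the class `E_A`: locally integrable on `[0,∞)` with exponential growth. -/
def MemE (A : ℝ) (f : ℝ → ℝ) : Prop :=
  MeasureTheory.LocallyIntegrableOn f (Set.Ici 0) ∧
    ∃ K > 0, ∀ t ≥ (0 : ℝ), |f t| ≤ K * Real.exp (A * t)

/-- Falling factorial `a↓r = a(a-1)⋯(a-r+1)` for integer `a`. -/
def ffall (a : ℤ) (r : ℕ) : ℤ := ∏ i ∈ Finset.range r, (a - i)


section Aux
open Set
open scoped fwdDiff

lemma szasz_nonneg (n k : ℕ) {x : ℝ} (hx : 0 ≤ x) : 0 ≤ szasz n k x := by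
  unfold szasz
  have : (0:ℝ) ≤ (n:ℝ) * x := mul_nonneg (Nat.cast_nonneg n) hx
  positivity

lemma szasz_le (n k : ℕ) {y b : ℝ} (hy : 0 ≤ y) (hyb : y ≤ b) :
    szasz n k y ≤ ((n : ℝ) * b) ^ k / (Nat.factorial k) := by
  unfold szasz
  have h1 : Real.exp (-(n : ℝ) * y) ≤ 1 := by
    apply Real.exp_le_one_iff.2
    have : (0:ℝ) ≤ (n:ℝ) * y := mul_nonneg (Nat.cast_nonneg n) hy
    linarith
  have h2 : ((n:ℝ) * y) ^ k ≤ ((n:ℝ) * b) ^ k := by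
    apply pow_le_pow_left₀ (mul_nonneg (Nat.cast_nonneg n) hy)
    exact mul_le_mul_of_nonneg_left hyb (Nat.cast_nonneg n)
  have h4 : Real.exp (-(n:ℝ) * y) * ((n:ℝ) * y) ^ k ≤ ((n:ℝ) * b) ^ k := by
    calc Real.exp (-(n:ℝ) * y) * ((n:ℝ) * y) ^ k
        ≤ 1 * ((n:ℝ) * b) ^ k := by
          apply mul_le_mul h1 h2 (pow_nonneg (mul_nonneg (Nat.cast_nonneg n) hy) k) zero_le_one
      _ = ((n:ℝ) * b) ^ k := one_mul _
  gcongr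

lemma hasDerivAt_szasz (n k : ℕ) (x : ℝ) :
    HasDerivAt (szasz n k) ((n:ℝ) * (szaszZ n ((k:ℤ) - 1) x - szasz n k x)) x := by
  have hin : HasDerivAt (fun y : ℝ => -(n:ℝ) * y) (-(n:ℝ) * 1) x :=
    (hasDerivAt_id x).const_mul (-(n:ℝ))
  have hexp : HasDerivAt (fun y : ℝ => Real.exp (-(n:ℝ) * y))
      (Real.exp (-(n:ℝ) * x) * (-(n:ℝ) * 1)) x := hin.exp
  have hin2 : HasDerivAt (fun y : ℝ => (n:ℝ) * y) ((n:ℝ) * 1) x :=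
    (hasDerivAt_id x).const_mul (n:ℝ)
  have hpow : HasDerivAt (fun y : ℝ => ((n:ℝ) * y) ^ k)
      ((k:ℝ) * ((n:ℝ) * x) ^ (k - 1) * ((n:ℝ) * 1)) x := hin2.pow k
  have h := (hexp.mul hpow).div_const (Nat.factorial k : ℝ)
  refine HasDerivAt.congr_deriv h ?_
  symm
  rcases k with _ | p
  · simp [szasz, szaszZ]
    ring
  · have hz : szaszZ n ((p + 1 : ℕ) - 1 : ℤ) x = szasz n p x := by
      have : ((p + 1 : ℕ) : ℤ) - 1 = (p : ℤ) := by push_cast; ring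
      simp [szaszZ, this]
    rw [hz]
    unfold szasz
    have hfac : (Nat.factorial (p+1) : ℝ) = (p+1) * Nat.factorial p := by
      push_cast [Nat.factorial_succ]; ring
    have hfp : (Nat.factorial p : ℝ) ≠ 0 := by positivity
    have hfp1 : (Nat.factorial (p+1) : ℝ) ≠ 0 := by positivity
    field_simp
    rw [hfac]
    push_cast
    ring

lemma integrableOn_pow_mul_exp {c : ℝ} (hc : 0 < c) (p : ℕ) :
    IntegrableOn (fun t : ℝ => t ^ p * Real.exp (-(c * t))) (Ioi (0:ℝ)) := by
  have base : IntegrableOn (fun t : ℝ => Real.exp (-t) * t ^ (((p:ℝ)+1) - 1)) (Ioi (0:ℝ)) :=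
    Real.GammaIntegral_convergent (by positivity)
  have base' : IntegrableOn (fun t : ℝ => Real.exp (-t) * t ^ p) (Ioi (0:ℝ)) := by
    apply base.congr_fun ?_ measurableSet_Ioi
    intro t ht
    simp [Real.rpow_natCast]
  have scaled : IntegrableOn (fun t : ℝ => Real.exp (-(c*t)) * (c*t) ^ p) (Ioi (0:ℝ)) := by
    have := (integrableOn_Ioi_comp_mul_left_iff (fun t : ℝ => Real.exp (-t) * t ^ p) 0 hc).2
      (by simpa using base')
    simpa using this
  have h2 : IntegrableOn (fun t : ℝ => ((c:ℝ) ^ p)⁻¹ * (Real.exp (-(c*t)) * (c*t) ^ p)) (Ioi (0:ℝ)) :=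
    scaled.const_mul _
  apply h2.congr_fun ?_ measurableSet_Ioi
  intro t ht
  have : (c*t)^p = c^p * t^p := mul_pow c t p
  field_simp [this]
  ring

lemma integral_pow_mul_exp {c : ℝ} (hc : 0 < c) (p : ℕ) :
    ∫ t in Ioi (0:ℝ), t ^ p * Real.exp (-(c * t)) = (Nat.factorial p : ℝ) / c ^ (p+1) := by
  have h := integral_rpow_mul_exp_neg_mul_Ioi (a := (p:ℝ)+1) (r := c) (by positivity) hc
  have heq : ∀ t ∈ Ioi (0:ℝ), t ^ (((p:ℝ)+1) - 1) * Real.exp (-(c * t))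
      = t ^ p * Real.exp (-(c * t)) := by
    intro t ht
    rw [add_sub_cancel_right, Real.rpow_natCast]
  rw [setIntegral_congr_fun measurableSet_Ioi heq] at h
  have hg : Real.Gamma ((p:ℝ)+1) = (Nat.factorial p : ℝ) := Real.Gamma_nat_eq_factorial p
  have hr : (1/c) ^ ((p:ℝ)+1) = (1/c)^((p:ℕ)+1) := by
    rw [show ((p:ℝ)+1) = (((p+1:ℕ)):ℝ) by push_cast; ring, Real.rpow_natCast]
  rw [h, hg, hr, div_pow, one_pow]
  field_simp

lemma integral_szasz_bound {A : ℝ} (hA : 0 ≤ A) {n : ℕ} (hn : A < n) {K : ℝ} (hK : 0 ≤ K)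
    {f : ℝ → ℝ} (hf : ∀ t ≥ (0:ℝ), |f t| ≤ K * Real.exp (A * t)) (p : ℕ) :
    |∫ t in Ioi (0:ℝ), szasz n p t * f t| ≤ K * (n:ℝ)^p / ((n:ℝ) - A)^(p+1) := by
  have hc : 0 < (n:ℝ) - A := sub_pos.2 hn
  set h : ℝ → ℝ := fun t => (K * ((n:ℝ)^p / (Nat.factorial p))) * (t ^ p * Real.exp (-(((n:ℝ)-A) * t))) with hh
  have hint : IntegrableOn h (Ioi (0:ℝ)) := (integrableOn_pow_mul_exp hc p).const_mul _
  have hbound : ∀ t ∈ Ioi (0:ℝ), |szasz n p t * f t| ≤ h t := by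
    intro t ht
    have ht0 : (0:ℝ) ≤ t := le_of_lt ht
    rw [abs_mul, abs_of_nonneg (szasz_nonneg n p ht0)]
    calc szasz n p t * |f t| ≤ szasz n p t * (K * Real.exp (A * t)) :=
          mul_le_mul_of_nonneg_left (hf t ht0) (szasz_nonneg n p ht0)
      _ = h t := by
          unfold szasz
          rw [hh]
          simp only []
          rw [mul_pow,
            show Real.exp (-(((n:ℝ)-A)*t)) = Real.exp (-(n:ℝ)*t) * Real.exp (A*t) from by
              rw [← Real.exp_add]; ring_nf]
          ring
  calc |∫ t in Ioi (0:ℝ), szasz n p t * f t| ≤ ∫ t in Ioi (0:ℝ), |szasz n p t| * |f t| := by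
        simpa [abs_mul] using norm_integral_le_integral_norm (μ := volume.restrict (Ioi 0)) (fun t => szasz n p t * f t)
    _ ≤ ∫ t in Ioi (0:ℝ), h t := by
        apply integral_mono_of_nonneg
        · exact Eventually.of_forall fun t => mul_nonneg (abs_nonneg _) (abs_nonneg _)
        · exact hint
        · filter_upwards [self_mem_ae_restrict measurableSet_Ioi] with t ht
          simpa [abs_mul] using hbound t ht
    _ = (K * ((n:ℝ)^p / (Nat.factorial p))) * ((Nat.factorial p : ℝ) / ((n:ℝ)-A) ^ (p+1)) := by
        rw [hh, MeasureTheory.integral_const_mul, integral_pow_mul_exp hc p]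
    _ = K * (n:ℝ)^p / ((n:ℝ) - A)^(p+1) := by
        have : (Nat.factorial p : ℝ) ≠ 0 := by positivity
        field_simp

/-- Bound on szaszZ for shifted index. -/
lemma szaszZ_sub_one_le (n k : ℕ) {y b : ℝ} (hy : 0 ≤ y) (hyb : y ≤ b) :
    |szaszZ n ((k:ℤ) - 1) y| ≤ (if k = 0 then 0 else ((n:ℝ)*b)^(k-1) / (Nat.factorial (k-1))) := by
  rcases k with _ | p
  · simp [szaszZ]
  · have : ((p+1 : ℕ) : ℤ) - 1 = (p : ℤ) := by push_cast; ring
    simp only [this, szaszZ, if_pos (Int.natCast_nonneg p), Int.toNat_natCast]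
    rw [abs_of_nonneg (szasz_nonneg n p hy)]
    simpa using szasz_le n p hy hyb

/-- Bound on coefficients of the Sop series. -/
lemma coeff_bound {A : ℝ} (hA : 0 ≤ A) {n : ℕ} (hn : A < n) {K : ℝ} (hK : 0 ≤ K)
    {f : ℝ → ℝ} (hf : ∀ t ≥ (0:ℝ), |f t| ≤ K * Real.exp (A * t)) (j : ℤ) (k : ℕ) :
    |(n:ℝ) * ∫ t in Ioi (0:ℝ), szaszZ n ((k:ℤ) - j) t * f t|
      ≤ (K * ((n:ℝ)/((n:ℝ)-A)) ^ (1-j).toNat) * ((n:ℝ)/((n:ℝ)-A)) ^ k := by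
  have hc : 0 < (n:ℝ) - A := sub_pos.2 hn
  have hn0 : (0:ℝ) < n := lt_of_le_of_lt hA hn
  have hr1 : (1:ℝ) ≤ (n:ℝ)/((n:ℝ)-A) := by
    rw [le_div_iff₀ hc]; linarith
  rcases lt_or_ge ((k:ℤ) - j) 0 with hneg | hpos
  · have : ∀ t : ℝ, szaszZ n ((k:ℤ) - j) t * f t = 0 := by
      intro t; unfold szaszZ; rw [if_neg (not_le.2 hneg)]; ring
    simp only [this]
    simp
    positivity
  · set p := ((k:ℤ) - j).toNat with hp
    have hzz : ∀ t : ℝ, szaszZ n ((k:ℤ) - j) t = szasz n p t := by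
      intro t; unfold szaszZ; rw [if_pos hpos]
    simp only [hzz]
    rw [abs_mul, abs_of_nonneg (le_of_lt hn0)]
    calc (n:ℝ) * |∫ t in Ioi (0:ℝ), szasz n p t * f t|
        ≤ (n:ℝ) * (K * (n:ℝ)^p / ((n:ℝ) - A)^(p+1)) :=
          mul_le_mul_of_nonneg_left (integral_szasz_bound hA hn hK hf p) (le_of_lt hn0)
      _ = K * ((n:ℝ)/((n:ℝ)-A)) ^ (p+1) := by
          rw [div_pow]; field_simp; ring
      _ ≤ K * ((n:ℝ)/((n:ℝ)-A)) ^ ((1-j).toNat + k) := by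
          apply mul_le_mul_of_nonneg_left ?_ hK
          apply pow_le_pow_right₀ hr1
          omega
      _ = (K * ((n:ℝ)/((n:ℝ)-A)) ^ (1-j).toNat) * ((n:ℝ)/((n:ℝ)-A)) ^ k := by
          rw [pow_add]; ring

-- shorthand for the "shifted" bound sequence
noncomputable def sbm (n : ℕ) (b : ℝ) (k : ℕ) : ℝ :=
  if k = 0 then 0 else ((n:ℝ)*b)^(k-1) / (Nat.factorial (k-1))

lemma sbm_nonneg (n : ℕ) {b : ℝ} (hb : 0 ≤ b) (k : ℕ) : 0 ≤ sbm n b k := by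
  unfold sbm
  split
  · exact le_rfl
  · positivity

lemma summable_sb (n : ℕ) (b r : ℝ) :
    Summable (fun k : ℕ => r ^ k * (((n:ℝ)*b) ^ k / (Nat.factorial k))) := by
  apply (Real.summable_pow_div_factorial (r * ((n:ℝ)*b))).congr
  intro k
  rw [mul_pow]
  ring

lemma summable_sbm (n : ℕ) (b r : ℝ) :
    Summable (fun k : ℕ => r ^ k * sbm n b k) := by
  apply (summable_nat_add_iff 1).1
  apply ((summable_sb n b r).mul_left r).congr
  intro k
  have : sbm n b (k+1) = ((n:ℝ)*b) ^ k / (Nat.factorial k) := by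
    unfold sbm; simp
  rw [this]
  ring

/-- The derivative of the series part of `Sop`. -/
lemma hasDerivAt_tsum_szasz (n : ℕ) (c : ℕ → ℝ) (E r : ℝ) (hr : 1 ≤ r) (hE : 0 ≤ E)
    (hc : ∀ k, |c k| ≤ E * r ^ k) {x : ℝ} (hx : 0 < x) :
    HasDerivAt (fun y => ∑' k : ℕ, szasz n k y * c k)
      (∑' k : ℕ, ((n:ℝ) * (szaszZ n ((k:ℤ) - 1) x - szasz n k x)) * c k) x := by
  set b : ℝ := x + 1 with hb
  have hb0 : (0:ℝ) ≤ b := by positivity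
  have hr0 : (0:ℝ) ≤ r := le_trans zero_le_one hr
  set u : ℕ → ℝ := fun k =>
    (n:ℝ) * (sbm n b k + ((n:ℝ)*b) ^ k / (Nat.factorial k)) * (E * r ^ k) with hu
  have hsum : Summable u := by
    apply Summable.congr
      ((((summable_sbm n b r).add (summable_sb n b r)).mul_left ((n:ℝ) * E)))
    intro k
    rw [hu]
    simp only []
    ring
  have hmem : x ∈ Ioo (0:ℝ) b := ⟨hx, by simp [hb]⟩
  apply hasDerivAt_tsum_of_isPreconnected hsum isOpen_Ioo
      (isPreconnected_Ioo)
      (g := fun k y => szasz n k y * c k)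
      (g' := fun k y => ((n:ℝ) * (szaszZ n ((k:ℤ) - 1) y - szasz n k y)) * c k)
      ?_ ?_ hmem ?_ hmem
  · intro k y _
    exact (hasDerivAt_szasz n k y).mul_const (c k)
  · intro k y hy
    have hy0 : (0:ℝ) ≤ y := le_of_lt hy.1
    have hyb : y ≤ b := le_of_lt hy.2
    rw [Real.norm_eq_abs, abs_mul, abs_mul]
    have h1 : |szaszZ n ((k:ℤ) - 1) y - szasz n k y|
        ≤ sbm n b k + ((n:ℝ)*b) ^ k / (Nat.factorial k) := by
      apply (abs_sub _ _).trans
      apply add_le_add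
      · exact (szaszZ_sub_one_le n k hy0 hyb).trans_eq (by rw [sbm])
      · rw [abs_of_nonneg (szasz_nonneg n k hy0)]
        exact szasz_le n k hy0 hyb
    rw [hu]
    simp only []
    have := mul_le_mul (mul_le_mul_of_nonneg_left h1 (abs_nonneg ((n:ℝ)))) (hc k)
      (abs_nonneg _) (mul_nonneg (abs_nonneg _)
        (add_nonneg (sbm_nonneg n hb0 k) (by positivity)))
    calc |(n:ℝ)| * |szaszZ n ((k:ℤ) - 1) y - szasz n k y| * |c k|
        ≤ |(n:ℝ)| * (sbm n b k + ((n:ℝ)*b) ^ k / (Nat.factorial k)) * (E * r ^ k) := this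
      _ = (n:ℝ) * (sbm n b k + ((n:ℝ)*b) ^ k / (Nat.factorial k)) * (E * r ^ k) := by
          rw [abs_of_nonneg (Nat.cast_nonneg n)]
  · -- summable at x
    apply Summable.of_norm_bounded (((summable_sb n b r).mul_left E))
    intro k
    rw [Real.norm_eq_abs, abs_mul, abs_of_nonneg (szasz_nonneg n k (le_of_lt hx))]
    calc szasz n k x * |c k| ≤ (((n:ℝ)*b) ^ k / (Nat.factorial k)) * (E * r ^ k) :=
          mul_le_mul (szasz_le n k (le_of_lt hx) (le_of_lt hmem.2)) (hc k) (abs_nonneg _)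
            (by positivity)
      _ = E * (r ^ k * (((n:ℝ)*b) ^ k / (Nat.factorial k))) := by ring

/-- Summability of the series and of the shifted series at a point. -/
lemma summable_szasz_mul (n : ℕ) (c : ℕ → ℝ) (E r : ℝ) (hr : 1 ≤ r) (hE : 0 ≤ E)
    (hc : ∀ k, |c k| ≤ E * r ^ k) {x : ℝ} (hx : 0 ≤ x) :
    Summable (fun k : ℕ => szasz n k x * c k) := by
  apply Summable.of_norm_bounded (((summable_sb n x r).mul_left E))
  intro k
  rw [Real.norm_eq_abs, abs_mul, abs_of_nonneg (szasz_nonneg n k hx)]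
  calc szasz n k x * |c k| ≤ (((n:ℝ)*x) ^ k / (Nat.factorial k)) * (E * r ^ k) :=
        mul_le_mul (szasz_le n k hx le_rfl) (hc k) (abs_nonneg _) (by positivity)
    _ = E * (r ^ k * (((n:ℝ)*x) ^ k / (Nat.factorial k))) := by ring

lemma summable_szaszZ_mul (n : ℕ) (c : ℕ → ℝ) (E r : ℝ) (hr : 1 ≤ r) (hE : 0 ≤ E)
    (hc : ∀ k, |c k| ≤ E * r ^ k) {x : ℝ} (hx : 0 ≤ x) :
    Summable (fun k : ℕ => (n:ℝ) * szaszZ n ((k:ℤ) - 1) x * c k) := by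
  apply Summable.of_norm_bounded ((((summable_sbm n x r).mul_left (E * n))))
  intro k
  rw [Real.norm_eq_abs, abs_mul, abs_mul, abs_of_nonneg (Nat.cast_nonneg n)]
  calc (n:ℝ) * |szaszZ n ((k:ℤ) - 1) x| * |c k|
      ≤ (n:ℝ) * sbm n x k * (E * r ^ k) := by
        apply mul_le_mul (mul_le_mul_of_nonneg_left
          ((szaszZ_sub_one_le n k hx le_rfl).trans_eq (by rw [sbm])) (Nat.cast_nonneg n))
          (hc k) (abs_nonneg _)
          (mul_nonneg (Nat.cast_nonneg n) (sbm_nonneg n hx k))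
    _ = E * (n:ℝ) * (r ^ k * sbm n x k) := by ring

/-- Rearranged form of the derivative series. -/
lemma tsum_deriv_split (n : ℕ) (c : ℕ → ℝ) (E r : ℝ) (hr : 1 ≤ r) (hE : 0 ≤ E)
    (hc : ∀ k, |c k| ≤ E * r ^ k) {x : ℝ} (hx : 0 ≤ x) :
    ∑' k : ℕ, ((n:ℝ) * (szaszZ n ((k:ℤ) - 1) x - szasz n k x)) * c k
      = (n:ℝ) * ((∑' k : ℕ, szasz n k x * c (k+1)) - ∑' k : ℕ, szasz n k x * c k) := by
  have hS1 : Summable (fun k : ℕ => (n:ℝ) * szaszZ n ((k:ℤ) - 1) x * c k) :=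
    summable_szaszZ_mul n c E r hr hE hc hx
  have hS2 : Summable (fun k : ℕ => szasz n k x * c k) :=
    summable_szasz_mul n c E r hr hE hc hx
  have hS2' : Summable (fun k : ℕ => (n:ℝ) * (szasz n k x * c k)) := hS2.mul_left _
  have hsplit : ∀ k : ℕ, ((n:ℝ) * (szaszZ n ((k:ℤ) - 1) x - szasz n k x)) * c k
      = (n:ℝ) * szaszZ n ((k:ℤ) - 1) x * c k - (n:ℝ) * (szasz n k x * c k) := by
    intro k; ring
  rw [tsum_congr hsplit, Summable.tsum_sub hS1 hS2']
  have hshift : ∑' k : ℕ, (n:ℝ) * szaszZ n ((k:ℤ) - 1) x * c k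
      = ∑' k : ℕ, (n:ℝ) * (szasz n k x * c (k+1)) := by
    rw [Summable.tsum_eq_zero_add hS1]
    have h0 : (n:ℝ) * szaszZ n ((0:ℕ) - 1 : ℤ) x * c 0 = 0 := by
      norm_num [szaszZ]
    rw [h0, zero_add]
    apply tsum_congr
    intro k
    have : (((k+1:ℕ)) : ℤ) - 1 = (k : ℤ) := by push_cast; ring
    rw [this]
    have : szaszZ n (k : ℤ) x = szasz n k x := by simp [szaszZ]
    rw [this]
    ring
  rw [hshift, tsum_mul_left, tsum_mul_left]
  ring

/-- Telescoping of the finite part. -/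
lemma sum_szaszZ_shift (n : ℕ) (J : ℕ) (x : ℝ) :
    ∑ k ∈ Finset.range J, szaszZ n ((k:ℤ) - 1) x
      = ∑ k ∈ Finset.range (J - 1), szasz n k x := by
  rcases J with _ | p
  · simp
  · rw [Finset.sum_range_succ']
    have h0 : szaszZ n ((0:ℕ) - 1 : ℤ) x = 0 := by norm_num [szaszZ]
    have hsucc : ∀ i : ℕ, szaszZ n (((i+1:ℕ)) - 1 : ℤ) x = szasz n i x := by
      intro i
      have : (((i+1:ℕ)) : ℤ) - 1 = (i : ℤ) := by push_cast; ring
      rw [this]; simp [szaszZ]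
    simp only [hsucc, h0, add_zero]
    norm_num

lemma hasDerivAt_Sop {A : ℝ} (hA : 0 ≤ A) {n : ℕ} (hn : A < n) {f : ℝ → ℝ} (hf : MemE A f)
    (j : ℤ) {x : ℝ} (hx : 0 < x) :
    HasDerivAt (fun y => Sop n j f y) ((n:ℝ) * (Sop n (j-1) f x - Sop n j f x)) x := by
  obtain ⟨-, K, hK, hKf⟩ := hf
  set r : ℝ := (n:ℝ)/((n:ℝ)-A) with hrdef
  have hc : 0 < (n:ℝ) - A := sub_pos.2 hn
  have hr1 : (1:ℝ) ≤ r := by rw [hrdef, le_div_iff₀ hc]; linarith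
  set c : ℤ → ℕ → ℝ := fun j k => (n:ℝ) * ∫ t in Ioi (0:ℝ), szaszZ n ((k:ℤ) - j) t * f t
    with hcdef
  have hcb : ∀ (j : ℤ) (k : ℕ), |c j k| ≤ (K * r ^ (1-j).toNat) * r ^ k :=
    fun j k => coeff_bound hA hn (le_of_lt hK) hKf j k
  have hE : (0:ℝ) ≤ K * r ^ (1-j).toNat := by positivity
  -- derivative of finite part
  have h1 : HasDerivAt (fun y => f 0 * ∑ k ∈ Finset.range j.toNat, szasz n k y)
      (f 0 * ∑ k ∈ Finset.range j.toNat,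
        ((n:ℝ) * (szaszZ n ((k:ℤ) - 1) x - szasz n k x))) x := by
    apply HasDerivAt.const_mul
    exact HasDerivAt.fun_sum fun k _ => hasDerivAt_szasz n k x
  -- derivative of series part
  have h2 : HasDerivAt (fun y => ∑' k : ℕ, szasz n k y * c j k)
      (∑' k : ℕ, ((n:ℝ) * (szaszZ n ((k:ℤ) - 1) x - szasz n k x)) * c j k) x :=
    hasDerivAt_tsum_szasz n (c j) _ r hr1 hE (hcb j) hx
  have hD := h1.add h2
  have hSopEq : (fun y => Sop n j f y)
      = fun y => (f 0 * ∑ k ∈ Finset.range j.toNat, szasz n k y)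
        + ∑' k : ℕ, szasz n k y * c j k := rfl
  rw [hSopEq]
  refine HasDerivAt.congr_deriv hD ?_
  symm
  -- now prove the value identity
  rw [tsum_deriv_split n (c j) _ r hr1 hE (hcb j) (le_of_lt hx)]
  have hcs : ∀ k : ℕ, c j (k+1) = c (j-1) k := by
    intro k
    rw [hcdef]
    simp only []
    have : (((k+1:ℕ)) : ℤ) - j = (k : ℤ) - (j-1) := by push_cast; ring
    rw [this]
  have hTs : ∑' k : ℕ, szasz n k x * c j (k+1) = ∑' k : ℕ, szasz n k x * c (j-1) k :=
    tsum_congr fun k => by rw [hcs k]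
  rw [hTs]
  -- finite part telescoping
  have hfin : ∑ k ∈ Finset.range j.toNat, ((n:ℝ) * (szaszZ n ((k:ℤ) - 1) x - szasz n k x))
      = (n:ℝ) * ((∑ k ∈ Finset.range (j-1).toNat, szasz n k x)
          - ∑ k ∈ Finset.range j.toNat, szasz n k x) := by
    rw [← Finset.mul_sum, Finset.sum_sub_distrib, sum_szaszZ_shift]
    have : (j-1).toNat = j.toNat - 1 := by omega
    rw [this]
  rw [hfin]
  have hSop1 : Sop n (j-1) f x = f 0 * ∑ k ∈ Finset.range (j-1).toNat, szasz n k x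
      + ∑' k : ℕ, szasz n k x * c (j-1) k := rfl
  have hSop2 : Sop n j f x = f 0 * ∑ k ∈ Finset.range j.toNat, szasz n k x
      + ∑' k : ℕ, szasz n k x * c j k := rfl
  rw [hSop1, hSop2]
  ring

/-- The binomial recombination identity, via forward differences. -/
lemma comb_identity (g : ℤ → ℝ) (m : ℕ) (j : ℤ) :
    ∑ ℓ ∈ Finset.range (m+1), (-1 : ℝ) ^ (m - ℓ) * (m.choose ℓ : ℝ) * (g (j - ℓ - 1) - g (j - ℓ))
      = ∑ ℓ ∈ Finset.range (m+2), (-1 : ℝ) ^ (m + 1 - ℓ) * ((m+1).choose ℓ : ℝ) * g (j - ℓ) := by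
  have key : ∀ (M : ℕ) (h : ℤ → ℝ), (fwdDiff (-1:ℤ))^[M] h j
      = ∑ ℓ ∈ Finset.range (M+1), (-1 : ℝ) ^ (M - ℓ) * (M.choose ℓ : ℝ) * h (j - ℓ) := by
    intro M h
    rw [fwdDiff_iter_eq_sum_shift]
    apply Finset.sum_congr rfl
    intro ℓ _
    have hidx : j + ℓ • (-1 : ℤ) = j - ℓ := by simp [smul_eq_mul]; ring
    rw [hidx, zsmul_eq_mul]
    push_cast
    ring
  have hL : ∑ ℓ ∈ Finset.range (m+1), (-1 : ℝ) ^ (m - ℓ) * (m.choose ℓ : ℝ)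
        * (g (j - ℓ - 1) - g (j - ℓ))
      = (fwdDiff (-1:ℤ))^[m] (fwdDiff (-1:ℤ) g) j := by
    rw [key m (fwdDiff (-1:ℤ) g)]
    apply Finset.sum_congr rfl
    intro ℓ _
    have : fwdDiff (-1:ℤ) g (j - ℓ) = g (j - ℓ - 1) - g (j - ℓ) := by
      simp only [fwdDiff]
      rw [show j - (ℓ:ℤ) + -1 = j - ℓ - 1 from by ring]
    rw [this]
  rw [hL, ← Function.iterate_succ_apply, key (m+1) g]

end Aux

/-- differentiation formula for `S_{n,j}f`. -/
theorem stmt_16 (j : ℤ) (A : ℝ) (hA : 0 ≤ A) (f : ℝ → ℝ) (hf : MemE A f) (n : ℕ)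
    (hn : A < n) (m : ℕ) :
    (∀ i < m, DifferentiableOn ℝ (iteratedDeriv i (fun y => Sop n j f y)) (Set.Ioi 0)) ∧
    ∀ x > (0 : ℝ), iteratedDeriv m (fun y => Sop n j f y) x =
      (n : ℝ) ^ m * ∑ ℓ ∈ Finset.range (m + 1),
        (-1 : ℝ) ^ (m - ℓ) * (m.choose ℓ : ℝ) * Sop n (j - ℓ) f x := by
  have hGd : ∀ (M : ℕ) {x : ℝ}, 0 < x → HasDerivAt
      (fun y => (n:ℝ)^M * ∑ ℓ ∈ Finset.range (M+1),
        (-1 : ℝ) ^ (M - ℓ) * (M.choose ℓ : ℝ) * Sop n (j - ℓ) f y)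
      ((n:ℝ)^M * ∑ ℓ ∈ Finset.range (M+1),
        (-1 : ℝ) ^ (M - ℓ) * (M.choose ℓ : ℝ)
          * ((n:ℝ) * (Sop n (j - ℓ - 1) f x - Sop n (j - ℓ) f x))) x := by
    intro M x hx
    apply HasDerivAt.const_mul
    apply HasDerivAt.fun_sum
    intro ℓ _
    exact (hasDerivAt_Sop hA hn hf (j - ℓ) hx).const_mul _
  have key : ∀ M : ℕ, ∀ x > (0:ℝ), iteratedDeriv M (fun y => Sop n j f y) x =
      (n : ℝ) ^ M * ∑ ℓ ∈ Finset.range (M + 1),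
        (-1 : ℝ) ^ (M - ℓ) * (M.choose ℓ : ℝ) * Sop n (j - ℓ) f x := by
    intro M
    induction M with
    | zero =>
      intro x hx
      simp [iteratedDeriv_zero, Finset.sum_range_one]
    | succ M IH =>
      intro x hx
      have hev : iteratedDeriv M (fun y => Sop n j f y) =ᶠ[nhds x]
          (fun y => (n:ℝ)^M * ∑ ℓ ∈ Finset.range (M+1),
            (-1 : ℝ) ^ (M - ℓ) * (M.choose ℓ : ℝ) * Sop n (j - ℓ) f y) :=
        eventually_of_mem (isOpen_Ioi.mem_nhds hx) (fun y hy => IH y hy)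
      rw [iteratedDeriv_succ, hev.deriv_eq, (hGd M hx).deriv]
      have h1 : ∑ ℓ ∈ Finset.range (M+1), (-1 : ℝ) ^ (M - ℓ) * (M.choose ℓ : ℝ)
            * ((n:ℝ) * (Sop n (j - ℓ - 1) f x - Sop n (j - ℓ) f x))
          = (n:ℝ) * ∑ ℓ ∈ Finset.range (M+1), (-1 : ℝ) ^ (M - ℓ) * (M.choose ℓ : ℝ)
            * (Sop n (j - ℓ - 1) f x - Sop n (j - ℓ) f x) := by
        rw [Finset.mul_sum]
        exact Finset.sum_congr rfl fun ℓ _ => by ring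
      rw [h1, comb_identity (fun i => Sop n i f x) M j]
      ring
  refine ⟨?_, key m⟩
  intro i _ x hx
  have hev : iteratedDeriv i (fun y => Sop n j f y) =ᶠ[nhds x]
      (fun y => (n:ℝ)^i * ∑ ℓ ∈ Finset.range (i+1),
        (-1 : ℝ) ^ (i - ℓ) * (i.choose ℓ : ℝ) * Sop n (j - ℓ) f y) :=
    eventually_of_mem (isOpen_Ioi.mem_nhds hx) (fun y hy => key i y hy)
  have : DifferentiableAt ℝ (iteratedDeriv i (fun y => Sop n j f y)) x :=
    hev.differentiableAt_iff.2 (hGd i hx).differentiableAt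
  exact this.differentiableWithinAt
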